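/- arXiv:2107.00198 — 7 statements merged into one kernel-verified Lean document; each statement's English description precedes it below -/
import Mathlib

section
/- When Player stands at 5 and Banker plays a best response assuming Player is a non-tireur, Player's win probability is W_{0,0} = 792/1781, tie probability is T_{0,0} = 153/1781, and expected profit is E_{0,0} = -44/1781. -/
open Finset

/-- Distribution of the value of a single third card. -/
def p (i : ℕ) : ℚ := (1 + 3 * (if i = 0 then 1 else 0)) / 13

/-- Distribution of the value (mod 10) of a two-card hand. -/
def q (j : ℕ) : ℚ := (16 + 9 * (if j = 0 then 1 else 0)) / 169

/-- Sign function, valued in ℚ. -/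
def sgn (x : ℤ) : ℚ := if 0 < x then 1 else if x < 0 then -1 else 0

/-- Banker's best-response matrix `D₀` (Player known to stand at 5), as given in the paper. -/
def D0 (j : ℕ) (k : Option ℕ) : Bool :=
  match k with
  | none => decide (j ≤ 5)
  | some k => decide (j ≤ 2 ∨ (j = 3 ∧ k ≤ 7) ∨ (j = 4 ∧ 2 ≤ k ∧ k ≤ 7) ∨
      (j = 5 ∧ 5 ≤ k ∧ k ≤ 7) ∨ (j = 6 ∧ 6 ≤ k ∧ k ≤ 7))

/-- Banker's best-response matrix `D₁` (Player known to draw at 5): `D₀` with additional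
draws at (3,9), (4,1), (5,4), (6,∅). -/
def D1 (j : ℕ) (k : Option ℕ) : Bool :=
  D0 j k || decide ((j, k) ∈ ([(3, some 9), (4, some 1), (5, some 4), (6, none)] :
    List (ℕ × Option ℕ)))

/-- `A₀`: expectation of `f`(Player total − Banker final total) when Player stands on a
two-card total of 5, Banker (total `j ∈ {0,…,7}`, distribution `q` conditioned) drawing iff
`D j none`. -/
def A0 (D : ℕ → Option ℕ → Bool) (f : ℤ → ℚ) : ℚ :=
  (∑ j ∈ Finset.range 8,
    (if D j none then ∑ l ∈ Finset.range 10, f (5 - (((j + l) % 10 : ℕ) : ℤ)) * q j * p l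
     else f (5 - (j : ℤ)) * q j)) / ∑ j ∈ Finset.range 8, q j

/-- `A₁`: expectation of `f`(Player final total − Banker final total) when Player draws a
third card `k` on a two-card total of 5, Banker drawing iff `D j (some k)`. -/
def A1 (D : ℕ → Option ℕ → Bool) (f : ℤ → ℚ) : ℚ :=
  (∑ j ∈ Finset.range 8, ∑ k ∈ Finset.range 10,
    (if D j (some k) then ∑ l ∈ Finset.range 10,
        f ((((5 + k) % 10 : ℕ) : ℤ) - (((j + l) % 10 : ℕ) : ℤ)) * q j * p k * p l
     else f ((((5 + k) % 10 : ℕ) : ℤ) - (j : ℤ)) * q j * p k)) / ∑ j ∈ Finset.range 8, q j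

/-- Indicator of a Player win. -/
def fwin (x : ℤ) : ℚ := if 0 < x then 1 else 0

/-- Indicator of a tie. -/
def ftie (x : ℤ) : ℚ := if x = 0 then 1 else 0

/-- Indicator of a Player loss. -/
def floss (x : ℤ) : ℚ := if x < 0 then 1 else 0

/-- Player stands at 5, Banker best-responds assuming a non-tireur. -/
theorem W00_T00_E00 :
    A0 D0 fwin = 792 / 1781 ∧ A0 D0 ftie = 153 / 1781 ∧ A0 D0 sgn = -44 / 1781 := by
  refine ⟨?_, ?_, ?_⟩ <;>
  · norm_num [A0, D0, fwin, ftie, sgn, q, p, Finset.sum_range_succ]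
end

section
/- When Player stands at 5 and Banker plays a best response assuming Player is a tireur (who would have drawn at 5), Player's win probability is W_{0,1} = 872/1781, tie probability is T_{0,1} = 169/1781, and expected profit is E_{0,1} = 132/1781. -/
open Finset

/-- Player stands at 5, Banker best-responds assuming a tireur. -/
theorem W01_T01_E01 :
    A0 D1 fwin = 872 / 1781 ∧ A0 D1 ftie = 169 / 1781 ∧ A0 D1 sgn = 132 / 1781 := by
  refine ⟨?_, ?_, ?_⟩ <;> norm_num [A0, D1, D0, fwin, ftie, sgn, q, p, Finset.sum_range_succ]
end

section
/- When Player draws at 5 and Banker plays a best response assuming Player is a non-tireur, Player's win probability is W_{1,0} = 10352/23153, tie probability is T_{1,0} = 2928/23153, and expected profit is E_{1,0} = 479/23153. -/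
open Finset

set_option maxHeartbeats 4000000 in
/-- Player draws at 5, Banker best-responds assuming a non-tireur. -/
theorem W10_T10_E10 :
    A1 D0 fwin = 10352 / 23153 ∧ A1 D0 ftie = 2928 / 23153 ∧ A1 D0 sgn = 479 / 23153 := by
  refine ⟨?_, ?_, ?_⟩ <;> norm_num [A1, D0, fwin, ftie, sgn, p, q, Finset.sum_range_succ, Finset.sum_range_zero]
end

section
/- When Player draws at 5 and Banker plays a best response assuming Player is a tireur, Player's win probability is W_{1,1} = 10176/23153, tie probability is T_{1,1} = 2976/23153, and expected profit is E_{1,1} = 175/23153. -/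
open Finset

set_option maxHeartbeats 4000000 in
/-- Player draws at 5, Banker best-responds assuming a tireur. -/
theorem W11_T11_E11 :
    A1 D1 fwin = 10176 / 23153 ∧ A1 D1 ftie = 2976 / 23153 ∧ A1 D1 sgn = 175 / 23153 := by
  refine ⟨?_, ?_, ?_⟩ <;>
  · simp only [A1, D1, D0, fwin, ftie, sgn, p, q, Finset.sum_range_succ, Finset.sum_range_zero]
    norm_num [reduceCtorEq]
    simp only [reduceCtorEq, if_false]
    norm_num
end

section
/- If Banker's drawing strategy D_1 is modified by Badoureau's three errors—flipping the entries at (4,1), (4,9), and (6,6)—then with Player drawing at 5, Player's win probability becomes 10288/23153, tie probability 2800/23153, and expected profit 223/23153, matching Badoureau's (and Bertrand's) published values. -/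
open Finset

/-- `D₁` with Badoureau's three errors: entries flipped at (4,1), (4,9), (6,6). -/
def DBadoureau (j : ℕ) (k : Option ℕ) : Bool :=
  if (j, k) ∈ ([(4, some 1), (4, some 9), (6, some 6)] : List (ℕ × Option ℕ)) then !(D1 j k)
  else D1 j k

set_option maxHeartbeats 4000000 in
/-- With Badoureau's erroneous matrix, Player drawing at 5 gets Badoureau's (and Bertrand's)
published values. -/
theorem badoureau_values :
    A1 DBadoureau fwin = 10288 / 23153 ∧ A1 DBadoureau ftie = 2800 / 23153 ∧
    A1 DBadoureau sgn = 223 / 23153 := by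
  refine ⟨?_, ?_, ?_⟩ <;>
  · norm_num [A1, Finset.sum_range_succ, DBadoureau, D1, D0, fwin, ftie, sgn, p, q, Option.some_ne_none]
end

section
/- Under the correct best-response matrices, E_{0,1} > E_{1,0} > E_{1,1} > 0 > E_{0,0}: standing at 5 against a Banker who believes Player draws gives the largest expectation, and standing at 5 against a Banker who knows it gives a negative expectation. -/
open Finset

set_option maxHeartbeats 2000000 in
/-- Ordering of Player's expectations: E₀₁ > E₁₀ > E₁₁ > 0 > E₀₀. -/
theorem expectation_ordering :
    A0 D1 sgn > A1 D0 sgn ∧ A1 D0 sgn > A1 D1 sgn ∧ A1 D1 sgn > 0 ∧ 0 > A0 D0 sgn := by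
  refine ⟨?_, ?_, ?_, ?_⟩ <;>
    norm_num [A0, A1, D0, D1, sgn, p, q, Finset.sum_range_succ, reduceCtorEq, Option.some_ne_none]
end

section
/- The naive averages of Player expectations satisfy (E_{0,0} + E_{0,1})/2 = 44/1781 and (E_{1,0} + E_{1,1})/2 = 327/23153, and these differ from the correct expectations -44/1781 and 287/23153 under Banker's true best response D_{1/2} to the (1/2,1/2) mixed strategy; in particular the naive standing average is positive while the correct standing expectation is negative. -/
open Finset

/-- `D_{1/2}`: `D₀` with additional draws at (3,9) and (5,4). -/
def Dhalf (j : ℕ) (k : Option ℕ) : Bool :=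
  D0 j k || decide ((j, k) ∈ ([(3, some 9), (5, some 4)] : List (ℕ × Option ℕ)))


lemma hA0D0 : A0 D0 sgn = -44/1781 := by
  simp only [A0, Finset.sum_range_succ, Finset.sum_range_zero]
  norm_num [D0, sgn, p, q]

lemma hA0D1 : A0 D1 sgn = 132/1781 := by
  simp only [A0, Finset.sum_range_succ, Finset.sum_range_zero]
  norm_num [D1, D0, sgn, p, q, Option.some_ne_none]

lemma hA0Dhalf : A0 Dhalf sgn = -44/1781 := by
  simp only [A0, Finset.sum_range_succ, Finset.sum_range_zero]
  norm_num [Dhalf, D0, sgn, p, q]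

set_option maxHeartbeats 4000000 in
lemma hA1D0 : A1 D0 sgn = 479/23153 := by
  simp only [A1, Finset.sum_range_succ, Finset.sum_range_zero]
  norm_num [D0, sgn, p, q]

set_option maxHeartbeats 4000000 in
lemma hA1D1 : A1 D1 sgn = 175/23153 := by
  simp only [A1, Finset.sum_range_succ, Finset.sum_range_zero]
  norm_num [D1, D0, sgn, p, q, Option.some_ne_none]

set_option maxHeartbeats 4000000 in
lemma hA1Dhalf : A1 Dhalf sgn = 287/23153 := by
  simp only [A1, Finset.sum_range_succ, Finset.sum_range_zero]
  norm_num [Dhalf, D0, sgn, p, q]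

/-- The naive averages of expectations differ from the correct expectations against the
best response `D_{1/2}` to the (1/2,1/2) mixed strategy; in particular the naive standing
average is positive while the correct standing expectation is negative. -/
theorem naive_averages_wrong :
    (A0 D0 sgn + A0 D1 sgn) / 2 = 44 / 1781 ∧
    (A1 D0 sgn + A1 D1 sgn) / 2 = 327 / 23153 ∧
    A0 Dhalf sgn = -44 / 1781 ∧ A1 Dhalf sgn = 287 / 23153 ∧
    (A0 D0 sgn + A0 D1 sgn) / 2 ≠ A0 Dhalf sgn ∧
    (A1 D0 sgn + A1 D1 sgn) / 2 ≠ A1 Dhalf sgn ∧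
    0 < (A0 D0 sgn + A0 D1 sgn) / 2 ∧ A0 Dhalf sgn < 0 := by
  rw [hA0D0, hA0D1, hA0Dhalf, hA1D0, hA1D1, hA1Dhalf]
  norm_num
end
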